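/- For two independent Laplace random variables X, Y ∼ Lap(1/γ) and a real number Δ ≥ 0, the probability that Y − X > Δ is at most (2 + γΔ)/(4·exp(γΔ)). -/

import Mathlib

open MeasureTheory ProbabilityTheory

/-- The density of the Laplace distribution `Lap(1/γ)`: `(γ/2) exp(-γ|x|)`. -/
noncomputable def laplacePDF (γ x : ℝ) : ℝ := (γ / 2) * Real.exp (-γ * |x|)

/-! Conditioning on `X`, `P(Y - X > Δ) = ∫ f(x) T(x + Δ) dx`, where `f` is the Laplace density and
`T(t) = P(Y > t)` its tail. On each of the ranges `x ≤ -Δ`, `-Δ < x ≤ 0` and `0 < x` the integrand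
is an explicit combination of exponentials, and the three pieces contribute `3/8`, `γΔ/4` and
`1/8` times `exp(-γΔ)`; so the bound holds with equality. -/

open Set Real

lemma measure_lt_sub_eq_lintegral {Ω : Type*} [MeasurableSpace Ω] {μ : Measure Ω}
    [IsFiniteMeasure μ] {X Y : Ω → ℝ} (hX : Measurable X) (hY : Measurable Y)
    (hindep : IndepFun X Y μ) (Δ : ℝ) :
    μ {ω | Δ < Y ω - X ω} = ∫⁻ x, μ.map Y (Ioi (x + Δ)) ∂μ.map X := by
  have hs : MeasurableSet {p : ℝ × ℝ | Δ < p.2 - p.1} :=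
    measurableSet_lt measurable_const (measurable_snd.sub measurable_fst)
  have hslice (x : ℝ) : Prod.mk x ⁻¹' {p : ℝ × ℝ | Δ < p.2 - p.1} = Ioi (x + Δ) := by
    ext y
    simp [lt_sub_iff_add_lt']
  simp_rw [← hslice]
  rw [← Measure.prod_apply hs, ← (indepFun_iff_map_prod_eq_prod_map_map hX.aemeasurable
    hY.aemeasurable).1 hindep, Measure.map_apply (hX.prodMk hY) hs]
  rfl

noncomputable def laplaceTail (γ t : ℝ) : ℝ :=
  if t ≤ 0 then 1 - exp (γ * t) / 2 else exp (-γ * t) / 2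

noncomputable def laplaceMeasure (γ : ℝ) : Measure ℝ :=
  volume.withDensity fun x => ENNReal.ofReal (laplacePDF γ x)

section Laplace

variable {γ : ℝ}

lemma laplacePDF_nonneg (hγ : 0 < γ) (x : ℝ) : 0 ≤ laplacePDF γ x := by
  unfold laplacePDF; positivity

lemma measurable_laplacePDF (γ : ℝ) : Measurable (laplacePDF γ) := by
  unfold laplacePDF; fun_prop

lemma laplacePDF_of_nonpos {x : ℝ} (hx : x ≤ 0) : laplacePDF γ x = γ / 2 * exp (γ * x) := by
  rw [laplacePDF, abs_of_nonpos hx, neg_mul_neg]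

lemma laplacePDF_of_nonneg {x : ℝ} (hx : 0 ≤ x) : laplacePDF γ x = γ / 2 * exp (-γ * x) := by
  rw [laplacePDF, abs_of_nonneg hx]

lemma integrableOn_Iic_laplacePDF (hγ : 0 < γ) {t : ℝ} (ht : t ≤ 0) :
    IntegrableOn (laplacePDF γ) (Iic t) :=
  IntegrableOn.congr_fun ((integrableOn_exp_mul_Iic hγ t).const_mul (γ / 2))
    (fun _ hx => (laplacePDF_of_nonpos (hx.trans ht)).symm) measurableSet_Iic

lemma integrableOn_Ioi_laplacePDF (hγ : 0 < γ) {t : ℝ} (ht : 0 ≤ t) :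
    IntegrableOn (laplacePDF γ) (Ioi t) :=
  IntegrableOn.congr_fun ((integrableOn_exp_mul_Ioi (neg_lt_zero.2 hγ) t).const_mul (γ / 2))
    (fun _ hx => (laplacePDF_of_nonneg (ht.trans (le_of_lt hx))).symm) measurableSet_Ioi

lemma integrable_laplacePDF (hγ : 0 < γ) : Integrable (laplacePDF γ) := by
  rw [← integrableOn_univ, ← Iic_union_Ioi (a := 0), integrableOn_union]
  exact ⟨integrableOn_Iic_laplacePDF hγ le_rfl, integrableOn_Ioi_laplacePDF hγ le_rfl⟩

lemma integral_Iic_laplacePDF (hγ : 0 < γ) {t : ℝ} (ht : t ≤ 0) :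
    ∫ x in Iic t, laplacePDF γ x = exp (γ * t) / 2 := by
  rw [setIntegral_congr_fun measurableSet_Iic fun x hx => laplacePDF_of_nonpos (hx.trans ht),
    integral_const_mul, integral_exp_mul_Iic hγ]
  field_simp

lemma integral_Ioi_laplacePDF_of_nonneg (hγ : 0 < γ) {t : ℝ} (ht : 0 ≤ t) :
    ∫ x in Ioi t, laplacePDF γ x = exp (-γ * t) / 2 := by
  rw [setIntegral_congr_fun measurableSet_Ioi
      fun x hx => laplacePDF_of_nonneg (ht.trans (le_of_lt hx)),
    integral_const_mul, integral_exp_mul_Ioi (neg_lt_zero.2 hγ)]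
  field_simp

lemma integral_laplacePDF (hγ : 0 < γ) : ∫ x, laplacePDF γ x = 1 := by
  rw [← intervalIntegral.integral_Iic_add_Ioi (integrableOn_Iic_laplacePDF hγ le_rfl)
    (integrableOn_Ioi_laplacePDF hγ le_rfl), integral_Iic_laplacePDF hγ le_rfl,
    integral_Ioi_laplacePDF_of_nonneg hγ le_rfl]
  norm_num

lemma integral_Ioi_laplacePDF (hγ : 0 < γ) (t : ℝ) :
    ∫ x in Ioi t, laplacePDF γ x = laplaceTail γ t := by
  rw [laplaceTail]
  split_ifs with ht
  · have hsplit := intervalIntegral.integral_Iic_add_Ioi (b := t)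
      (integrable_laplacePDF hγ).integrableOn (integrable_laplacePDF hγ).integrableOn
    rw [integral_laplacePDF hγ, integral_Iic_laplacePDF hγ ht] at hsplit
    linarith
  · exact integral_Ioi_laplacePDF_of_nonneg hγ (le_of_not_ge ht)

lemma measurable_laplaceTail (γ : ℝ) : Measurable (laplaceTail γ) :=
  Measurable.ite measurableSet_Iic (by fun_prop) (by fun_prop)

lemma laplaceTail_nonneg (hγ : 0 < γ) (t : ℝ) : 0 ≤ laplaceTail γ t := by
  rw [← integral_Ioi_laplacePDF hγ]
  exact setIntegral_nonneg measurableSet_Ioi fun x _ => laplacePDF_nonneg hγ x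

lemma laplaceTail_le_one (hγ : 0 < γ) (t : ℝ) : laplaceTail γ t ≤ 1 := by
  rw [← integral_Ioi_laplacePDF hγ, ← integral_laplacePDF hγ]
  exact setIntegral_le_integral (integrable_laplacePDF hγ)
    (Filter.Eventually.of_forall (laplacePDF_nonneg hγ))

lemma laplacePDF_mul_laplaceTail_of_le_neg {Δ x : ℝ} (hx : x ≤ -Δ) (hΔ : 0 ≤ Δ) :
    laplacePDF γ x * laplaceTail γ (x + Δ) =
      γ / 2 * exp (γ * x) - γ / 4 * exp (γ * Δ) * exp (2 * γ * x) := by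
  rw [laplacePDF_of_nonpos (by linarith), laplaceTail, if_pos (by linarith),
    show 2 * γ * x = γ * x + γ * x by ring, mul_add, exp_add, exp_add]
  ring

lemma laplacePDF_mul_laplaceTail_of_mem_Ioc {Δ x : ℝ} (hx : x ∈ Ioc (-Δ) 0) :
    laplacePDF γ x * laplaceTail γ (x + Δ) = γ / 4 * exp (-γ * Δ) := by
  rw [laplacePDF_of_nonpos hx.2, laplaceTail, if_neg (by linarith [hx.1]),
    show -γ * Δ = γ * x + -γ * (x + Δ) by ring, exp_add]
  ring

lemma laplacePDF_mul_laplaceTail_of_pos {Δ x : ℝ} (hx : 0 < x) (hΔ : 0 ≤ Δ) :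
    laplacePDF γ x * laplaceTail γ (x + Δ) = γ / 4 * exp (-γ * Δ) * exp (-2 * γ * x) := by
  rw [laplacePDF_of_nonneg hx.le, laplaceTail, if_neg (by linarith),
    show -γ * (x + Δ) = -γ * Δ + -γ * x by ring, show -2 * γ * x = -γ * x + -γ * x by ring,
    exp_add, exp_add]
  ring

lemma integrable_laplacePDF_mul_laplaceTail (hγ : 0 < γ) (Δ : ℝ) :
    Integrable fun x => laplacePDF γ x * laplaceTail γ (x + Δ) :=
  (integrable_laplacePDF hγ).mul_bdd
    ((measurable_laplaceTail γ).comp (measurable_add_const Δ)).aestronglyMeasurable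
    (Filter.Eventually.of_forall fun x => by
      rw [norm_of_nonneg (laplaceTail_nonneg hγ _)]
      exact laplaceTail_le_one hγ _)

lemma integral_laplacePDF_mul_laplaceTail (hγ : 0 < γ) {Δ : ℝ} (hΔ : 0 ≤ Δ) :
    ∫ x, laplacePDF γ x * laplaceTail γ (x + Δ) = (2 + γ * Δ) / (4 * exp (γ * Δ)) := by
  have hint := integrable_laplacePDF_mul_laplaceTail hγ Δ
  have h2γ : 0 < 2 * γ := by positivity
  have left : ∫ x in Iic (-Δ), laplacePDF γ x * laplaceTail γ (x + Δ) = 3 / 8 * exp (-γ * Δ) := by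
    rw [setIntegral_congr_fun measurableSet_Iic
        fun x hx => laplacePDF_mul_laplaceTail_of_le_neg hx hΔ,
      integral_sub ((integrableOn_exp_mul_Iic hγ _).const_mul _)
        ((integrableOn_exp_mul_Iic h2γ _).const_mul _),
      integral_const_mul, integral_const_mul, integral_exp_mul_Iic hγ, integral_exp_mul_Iic h2γ,
      show 2 * γ * -Δ = -γ * Δ + -γ * Δ by ring, show γ * -Δ = -γ * Δ by ring, exp_add,
      neg_mul, exp_neg]
    field_simp
    ring
  have middle : ∫ x in Ioc (-Δ) 0, laplacePDF γ x * laplaceTail γ (x + Δ) =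
      Δ * (γ / 4 * exp (-γ * Δ)) := by
    rw [setIntegral_congr_fun measurableSet_Ioc
        fun x hx => laplacePDF_mul_laplaceTail_of_mem_Ioc hx, setIntegral_const,
      Measure.real, volume_Ioc, ENNReal.toReal_ofReal (by linarith), sub_neg_eq_add, zero_add,
      smul_eq_mul]
  have right : ∫ x in Ioi 0, laplacePDF γ x * laplaceTail γ (x + Δ) = 1 / 8 * exp (-γ * Δ) := by
    rw [setIntegral_congr_fun measurableSet_Ioi
        fun x hx => laplacePDF_mul_laplaceTail_of_pos hx hΔ,
      integral_const_mul, integral_exp_mul_Ioi (by linarith), mul_zero, exp_zero]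
    field_simp
    ring
  rw [← intervalIntegral.integral_Iic_add_Ioi hint.integrableOn hint.integrableOn,
    ← Ioc_union_Ioi_eq_Ioi (neg_nonpos.2 hΔ),
    setIntegral_union (Ioc_disjoint_Ioi le_rfl) measurableSet_Ioi hint.integrableOn
      hint.integrableOn, left, middle, right, neg_mul, exp_neg]
  field_simp
  ring

lemma laplaceMeasure_Ioi (hγ : 0 < γ) (t : ℝ) :
    laplaceMeasure γ (Ioi t) = ENNReal.ofReal (laplaceTail γ t) := by
  rw [laplaceMeasure, withDensity_apply _ measurableSet_Ioi,
    ← ofReal_integral_eq_lintegral_ofReal (integrable_laplacePDF hγ).integrableOn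
      (Filter.Eventually.of_forall (laplacePDF_nonneg hγ)),
    integral_Ioi_laplacePDF hγ]

lemma lintegral_laplaceMeasure_Ioi_add (hγ : 0 < γ) (Δ : ℝ) :
    ∫⁻ x, laplaceMeasure γ (Ioi (x + Δ)) ∂laplaceMeasure γ =
      ENNReal.ofReal (∫ x, laplacePDF γ x * laplaceTail γ (x + Δ)) := by
  simp_rw [laplaceMeasure_Ioi hγ]
  have hTail : Measurable fun x => ENNReal.ofReal (laplaceTail γ (x + Δ)) :=
    ((measurable_laplaceTail γ).comp (measurable_add_const Δ)).ennreal_ofReal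
  rw [laplaceMeasure, lintegral_withDensity_eq_lintegral_mul _
      (measurable_laplacePDF γ).ennreal_ofReal hTail,
    ofReal_integral_eq_lintegral_ofReal (integrable_laplacePDF_mul_laplaceTail hγ Δ)
      (Filter.Eventually.of_forall fun x =>
        mul_nonneg (laplacePDF_nonneg hγ x) (laplaceTail_nonneg hγ _))]
  refine lintegral_congr fun x => ?_
  rw [Pi.mul_apply, ENNReal.ofReal_mul (laplacePDF_nonneg hγ x)]

end Laplace

/-- For two independent Laplace random variables `X, Y ∼ Lap(1/γ)` and `Δ ≥ 0`,
the probability that `Y - X > Δ` is at most `(2 + γΔ)/(4 exp(γΔ))`. -/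
theorem stmt_3 {A : Type*} [MeasurableSpace A] (μ : Measure A) [IsProbabilityMeasure μ]
    (γ Δ : ℝ) (hγ : 0 < γ) (hΔ : 0 ≤ Δ)
    (X Y : A → ℝ) (hX : Measurable X) (hY : Measurable Y)
    (hXlaw : μ.map X = volume.withDensity (fun x => ENNReal.ofReal (laplacePDF γ x)))
    (hYlaw : μ.map Y = volume.withDensity (fun x => ENNReal.ofReal (laplacePDF γ x)))
    (hindep : IndepFun X Y μ) :
    μ {a | Y a - X a > Δ} ≤ ENNReal.ofReal ((2 + γ * Δ) / (4 * Real.exp (γ * Δ))) := by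
  calc μ {a | Y a - X a > Δ} = ∫⁻ x, μ.map Y (Ioi (x + Δ)) ∂μ.map X :=
        measure_lt_sub_eq_lintegral hX hY hindep Δ
    _ = ENNReal.ofReal (∫ x, laplacePDF γ x * laplaceTail γ (x + Δ)) := by
        rw [hXlaw, hYlaw]
        exact lintegral_laplaceMeasure_Ioi_add hγ Δ
    _ ≤ ENNReal.ofReal ((2 + γ * Δ) / (4 * Real.exp (γ * Δ))) := by
        rw [integral_laplacePDF_mul_laplaceTail hγ hΔ]
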